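/- Let 𝔊 = (G = (V,E), Φ, ψ_glive(ℋ)) be an augmented reachability or parity game in which every live group H ∈ ℋ has a singleton source set, and let 𝔊' = (G' = (V',E'), Φ', ψ_live(Eℓ)) be the associated game with live edges obtained by the splitting construction. Then for every vertex v ∈ V, a positional Player-0 strategy is winning from v in 𝔊 if and only if it is winning from v in 𝔊' (note that Player-0 vertices and Player-0 edges coincide in the two games, so their positional Player-0 strategies coincide). -/
import Mathlib


universe u

/-- A two-player game graph: finite-intended vertex set `V`, an ownership function
(`owner v = 0` means `v` is a Player-0 vertex, `owner v = 1` a Player-1 vertex),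
and an edge relation such that every vertex has at least one outgoing edge. -/
structure GameGraph (V : Type u) where
  owner : V → Fin 2
  E : V → V → Prop
  exists_succ : ∀ v, ∃ w, E v w

variable {V : Type u}

/-- A play of the game graph: an infinite sequence of vertices following edges. -/
def IsPlay (G : GameGraph V) (ρ : ℕ → V) : Prop :=
  ∀ k, G.E (ρ k) (ρ (k + 1))

/-- A (history-dependent) strategy: given the list of previously visited
vertices and the current vertex, it chooses a next vertex. -/
abbrev Strategy (V : Type u) := List V → V → V

/-- A strategy of Player `i` is valid if at each Player-`i` vertex it chooses
an edge of the game graph. -/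
def StratValid (G : GameGraph V) (i : Fin 2) (σ : Strategy V) : Prop :=
  ∀ (h : List V) (v : V), G.owner v = i → G.E v (σ h v)

/-- A positional (memoryless) strategy ignores the history. -/
def Positional (σ : Strategy V) : Prop :=
  ∀ (h h' : List V) (v : V), σ h v = σ h' v

/-- A play is compliant with the strategy `σ` of Player `i` (a `σ`-play) if at
every Player-`i` vertex it moves to the vertex chosen by `σ`. -/
def Compliant (G : GameGraph V) (i : Fin 2) (σ : Strategy V) (ρ : ℕ → V) : Prop :=
  ∀ k, G.owner (ρ k) = i → ρ (k + 1) = σ (List.ofFn fun j : Fin k => ρ j.val) (ρ k)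

/-- `σ` is a winning strategy for Player `i` from `v`, where `W` is the set of
plays that are winning for Player `i`. -/
def WinsFrom (G : GameGraph V) (i : Fin 2) (W : Set (ℕ → V)) (σ : Strategy V) (v : V) : Prop :=
  StratValid G i σ ∧
    ∀ ρ : ℕ → V, IsPlay G ρ → Compliant G i σ ρ → ρ 0 = v → ρ ∈ W

/-- The winning region of Player `i`: the vertices from which Player `i` has a
winning strategy. -/
def WinRegion (G : GameGraph V) (i : Fin 2) (W : Set (ℕ → V)) : Set V :=
  {v | ∃ σ, WinsFrom G i W σ v}

/-- A vertex occurs infinitely often along a play. -/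
def InfOft (ρ : ℕ → V) (v : V) : Prop := ∀ n, ∃ k, n ≤ k ∧ ρ k = v

/-- An edge is taken infinitely often along a play. -/
def EdgeInfOft (ρ : ℕ → V) (e : V × V) : Prop :=
  ∀ n, ∃ k, n ≤ k ∧ ρ k = e.1 ∧ ρ (k + 1) = e.2

/-- Parity objective: the maximal priority occurring infinitely often is even. -/
def ParityWin (P : V → ℕ) (ρ : ℕ → V) : Prop :=
  ∃ v, InfOft ρ v ∧ Even (P v) ∧ ∀ w, InfOft ρ w → P w ≤ P v

/-- The set of source vertices of a set of edges. -/
def srcSet (H : Set (V × V)) : Set V := {u | ∃ w, (u, w) ∈ H}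

/-- Group transition fairness (live group) assumption: for every live group `H`,
if some source vertex of `H` occurs infinitely often, then some edge of `H` is
taken infinitely often. -/
def psiGlive (Hc : Set (Set (V × V))) (ρ : ℕ → V) : Prop :=
  ∀ H ∈ Hc, (∃ u ∈ srcSet H, InfOft ρ u) → ∃ e ∈ H, EdgeInfOft ρ e

/-- Strong transition fairness assumption for live edges `Eℓ`: if the source of
a live edge occurs infinitely often, the edge is taken infinitely often. -/
def psiLive (El : Set (V × V)) (ρ : ℕ → V) : Prop :=
  ∀ e ∈ El, InfOft ρ e.1 → EdgeInfOft ρ e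



section Aux
open Classical

open Classical

lemma pigeon_freq {W : Type u} [Finite W] (g : ℕ → W) (S : Set ℕ)
    (hS : ∀ n, ∃ k, n ≤ k ∧ k ∈ S) :
    ∃ w, ∀ n, ∃ k, n ≤ k ∧ k ∈ S ∧ g k = w := by
  by_contra h
  push_neg at h
  choose nw hnw using h
  obtain ⟨M, hM⟩ := Finite.exists_le nw
  obtain ⟨k, hk, hkS⟩ := hS M
  exact hnw (g k) k (le_trans (hM (g k)) hk) hkS rfl

lemma nat_cross (g : ℕ → ℕ) (hstep : ∀ k, g (k+1) = g k ∨ g (k+1) = g k + 1)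
    (h0 : g 0 = 0) (hub : ∀ m, ∃ k, m ≤ g k) (m : ℕ) :
    ∃ k, g k = m ∧ g (k+1) = m + 1 := by
  have hex : ∃ k, m + 1 ≤ g k := hub (m+1)
  have hk : m + 1 ≤ g (Nat.find hex) := Nat.find_spec hex
  have hk0 : Nat.find hex ≠ 0 := by
    intro h; rw [h, h0] at hk; omega
  obtain ⟨k', hks⟩ := Nat.exists_eq_succ_of_ne_zero hk0
  rw [hks] at hk
  simp only [Nat.succ_eq_add_one] at hk
  have hlt : ¬ (m + 1 ≤ g k') := Nat.find_min hex (by omega)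
  rcases hstep k' with h | h <;> exact ⟨k', by omega, by omega⟩


end Aux

section Proj
variable {V : Type u} {B : Type u}

def pj (ρ' : ℕ → V ⊕ B) : ℕ → ℕ
  | 0 => 0
  | n+1 => if (ρ' (pj ρ' n + 1)).isLeft then pj ρ' n + 1 else pj ρ' n + 2

lemma pj_succ (ρ' : ℕ → V ⊕ B) (n : ℕ) :
    pj ρ' (n+1) = if (ρ' (pj ρ' n + 1)).isLeft then pj ρ' n + 1 else pj ρ' n + 2 := rfl

variable {ρ' : ℕ → V ⊕ B} (h0 : (ρ' 0).isLeft)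
  (h2 : ∀ k, (ρ' k).isRight → (ρ' (k+1)).isLeft)

lemma pj_ge (n : ℕ) : n ≤ pj ρ' n := by
  induction n with
  | zero => simp [pj]
  | succ n ih => rw [pj_succ]; split <;> omega

lemma pj_le (n : ℕ) : pj ρ' n ≤ 2 * n := by
  induction n with
  | zero => simp [pj]
  | succ n ih => rw [pj_succ]; split <;> omega

include h0 h2 in
lemma pj_isLeft (n : ℕ) : (ρ' (pj ρ' n)).isLeft := by
  induction n with
  | zero => exact h0
  | succ n ih =>
    rw [pj_succ]
    split
    · assumption
    · rename_i h
      exact h2 _ (by simpa [Sum.not_isLeft] using h)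

include h0 h2 in
lemma pj_surj : ∀ k, (ρ' k).isLeft → ∃ n, pj ρ' n = k := by
  intro k
  induction k using Nat.strong_induction_on with
  | _ k ih =>
    match k with
    | 0 => exact fun _ => ⟨0, rfl⟩
    | (k'+1) =>
      intro hk
      rcases hx : ρ' k' with x | x
      · obtain ⟨n, hn⟩ := ih k' (by omega) (by simp [hx])
        refine ⟨n+1, ?_⟩
        rw [pj_succ, hn, if_pos hk]
      · -- ρ' k' is inr; then k' ≥ 1 and ρ' (k'-1) is left
        match k' with
        | 0 => simp [hx] at h0
        | (k''+1) =>
          have hkl : (ρ' k'').isLeft := by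
            rcases hy : ρ' k'' with y | y
            · simp
            · have := h2 k'' (by simp [hy])
              simp [hx] at this
          obtain ⟨n, hn⟩ := ih k'' (by omega) hkl
          refine ⟨n+1, ?_⟩
          rw [pj_succ, hn, if_neg (by simp [hx]), ]
  end Proj


section Machine
open Classical
variable {V : Type u} {Hc : Set (Set (V × V))}

/-- state of the insertion machine -/
abbrev MSt (Hc : Set (Set (V × V))) : Type u :=
  (ℕ × ℕ) ⊕ (ℕ × ℕ × {H : Set (V × V) // H ∈ Hc})

open Classical in
noncomputable def mstep (ρ : ℕ → V) (L : List {H : Set (V × V) // H ∈ Hc}) :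
    MSt Hc → MSt Hc
  | .inl (n, j) =>
    match L[j % L.length]? with
    | some H => if (ρ n, ρ (n+1)) ∈ H.1 then .inr (n, j, H) else .inl (n+1, j)
    | none => .inl (n+1, j)
  | .inr (n, j, _) => .inl (n+1, j+1)

noncomputable def mseq (ρ : ℕ → V) (L : List {H : Set (V × V) // H ∈ Hc}) (k : ℕ) : MSt Hc :=
  (mstep ρ L)^[k] (.inl (0, 0))

variable (ρ : ℕ → V) (L : List {H : Set (V × V) // H ∈ Hc})

lemma mseq_zero : mseq ρ L 0 = .inl (0, 0) := rfl

lemma mseq_succ (k : ℕ) : mseq ρ L (k+1) = mstep ρ L (mseq ρ L k) :=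
  Function.iterate_succ_apply' _ _ _

lemma mstep_cases (s : MSt Hc) :
    (∃ n j, s = .inl (n, j) ∧ mstep ρ L s = .inl (n+1, j)) ∨
    (∃ n j H, s = .inl (n, j) ∧ mstep ρ L s = .inr (n, j, H) ∧
        L[j % L.length]? = some H ∧ (ρ n, ρ (n+1)) ∈ H.1) ∨
    (∃ n j H, s = .inr (n, j, H) ∧ mstep ρ L s = .inl (n+1, j+1)) := by
  rcases s with ⟨n, j⟩ | ⟨n, j, H⟩
  · rcases hL : L[j % L.length]? with _ | H
    · exact Or.inl ⟨n, j, rfl, by simp [mstep, hL]⟩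
    · by_cases hmem : (ρ n, ρ (n+1)) ∈ H.1
      · exact Or.inr (Or.inl ⟨n, j, H, rfl, by simp [mstep, hL, hmem], hL, hmem⟩)
      · exact Or.inl ⟨n, j, rfl, by simp [mstep, hL, hmem]⟩
  · exact Or.inr (Or.inr ⟨n, j, H, rfl, rfl⟩)

/-- invariant: an `inr` state always carries a true fact -/
lemma mseq_inr_inv (k : ℕ) : ∀ n j H, mseq ρ L k = .inr (n, j, H) →
    L[j % L.length]? = some H ∧ (ρ n, ρ (n+1)) ∈ H.1 := by
  induction k with
  | zero => intro n j H h; simp [mseq_zero] at h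
  | succ k ih =>
    intro n j H h
    rw [mseq_succ] at h
    rcases mstep_cases ρ L (mseq ρ L k) with ⟨n', j', _, h2⟩ | ⟨n', j', H', _, h2, hL, hm⟩ |
      ⟨n', j', H', _, h2⟩ <;> rw [h2] at h <;> simp_all

lemma mseq_cases (k : ℕ) :
    (∃ n j, mseq ρ L k = .inl (n, j) ∧ mseq ρ L (k+1) = .inl (n+1, j)) ∨
    (∃ n j H, mseq ρ L k = .inl (n, j) ∧ mseq ρ L (k+1) = .inr (n, j, H) ∧
        L[j % L.length]? = some H ∧ (ρ n, ρ (n+1)) ∈ H.1) ∨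
    (∃ n j H, mseq ρ L k = .inr (n, j, H) ∧ mseq ρ L (k+1) = .inl (n+1, j+1) ∧
        L[j % L.length]? = some H ∧ (ρ n, ρ (n+1)) ∈ H.1) := by
  rw [mseq_succ]
  rcases mstep_cases ρ L (mseq ρ L k) with ⟨n, j, h1, h2⟩ | ⟨n, j, H, h1, h2, hL, hm⟩ |
    ⟨n, j, H, h1, h2⟩
  · exact Or.inl ⟨n, j, h1, by rw [h1] at h2 ⊢; exact h2⟩
  · exact Or.inr (Or.inl ⟨n, j, H, h1, by rw [h1] at h2 ⊢; exact h2, hL, hm⟩)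
  · obtain ⟨hL, hm⟩ := mseq_inr_inv ρ L k n j H h1
    exact Or.inr (Or.inr ⟨n, j, H, h1, by rw [h1] at h2 ⊢; exact h2, hL, hm⟩)

/-- position and pointer accessors -/
def mpos : MSt Hc → ℕ := Sum.elim (·.1) (·.1)
def mptr : MSt Hc → ℕ := Sum.elim (·.2) (·.2.1)

lemma mpos_le (k : ℕ) : mpos (mseq ρ L k) ≤ k := by
  induction k with
  | zero => simp [mseq_zero, mpos]
  | succ k ih =>
    rcases mseq_cases ρ L k with ⟨n, j, h1, h2⟩ | ⟨n, j, H, h1, h2, _, _⟩ |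
      ⟨n, j, H, h1, h2, _, _⟩ <;> rw [h1] at ih <;> rw [h2] <;> simp [mpos] at ih ⊢ <;> omega

lemma mptr_le (k : ℕ) : mptr (mseq ρ L k) ≤ k := by
  induction k with
  | zero => simp [mseq_zero, mptr]
  | succ k ih =>
    rcases mseq_cases ρ L k with ⟨n, j, h1, h2⟩ | ⟨n, j, H, h1, h2, _, _⟩ |
      ⟨n, j, H, h1, h2, _, _⟩ <;> rw [h1] at ih <;> rw [h2] <;> simp [mptr] at ih ⊢ <;> omega

lemma mptr_step (k : ℕ) : mptr (mseq ρ L (k+1)) = mptr (mseq ρ L k) ∨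
    mptr (mseq ρ L (k+1)) = mptr (mseq ρ L k) + 1 := by
  rcases mseq_cases ρ L k with ⟨n, j, h1, h2⟩ | ⟨n, j, H, h1, h2, _, _⟩ |
    ⟨n, j, H, h1, h2, _, _⟩ <;> rw [h1, h2] <;> simp [mptr]

/-- the bound `k ≤ 2·pos (+1 in an inr state)` -/
lemma mpos_lb (k : ℕ) : (∀ n j, mseq ρ L k = .inl (n, j) → k ≤ 2 * n) ∧
    (∀ n j H, mseq ρ L k = .inr (n, j, H) → k ≤ 2 * n + 1) := by
  induction k with
  | zero => constructor <;> intro n j <;> [skip; intro H] <;> intro h <;>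
      rw [mseq_zero] at h <;> simp_all <;> omega
  | succ k ih =>
    rcases mseq_cases ρ L k with ⟨n, j, h1, h2⟩ | ⟨n, j, H, h1, h2, _, _⟩ |
      ⟨n, j, H, h1, h2, _, _⟩
    · have := ih.1 n j h1
      constructor
      · intro n' j' h; rw [h2] at h
        have : n' = n + 1 := by simp_all
        omega
      · intro n' j' H' h; rw [h2] at h; simp at h
    · have := ih.1 n j h1
      constructor
      · intro n' j' h; rw [h2] at h; simp at h
      · intro n' j' H' h; rw [h2] at h
        have : n' = n := by simp_all
        omega
    · have := ih.2 n j H h1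
      constructor
      · intro n' j' h; rw [h2] at h
        have : n' = n + 1 := by simp_all
        omega
      · intro n' j' H' h; rw [h2] at h; simp at h

lemma mstep_inl (n j : ℕ) :
    mstep ρ L (.inl (n, j)) = .inl (n+1, j) ∨
    ∃ H, mstep ρ L (.inl (n, j)) = .inr (n, j, H) ∧
      L[j % L.length]? = some H ∧ (ρ n, ρ (n+1)) ∈ H.1 := by
  rcases mstep_cases ρ L (.inl (n, j)) with ⟨a, b, h1, h2⟩ | ⟨a, b, H, h1, h2, hL, hm⟩ |
    ⟨a, b, H, h1, h2⟩
  · obtain ⟨rfl, rfl⟩ : a = n ∧ b = j := by simp_all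
    exact Or.inl h2
  · obtain ⟨rfl, rfl⟩ : a = n ∧ b = j := by simp_all
    exact Or.inr ⟨H, h2, hL, hm⟩
  · simp at h1

lemma mstep_inr' (n j : ℕ) (H : {H : Set (V × V) // H ∈ Hc}) :
    mstep ρ L (.inr (n, j, H)) = .inl (n+1, j+1) := rfl

/-- every position of `ρ` is reached in a left state -/
lemma mseq_left_reach (n : ℕ) : ∃ k j, n ≤ k ∧ mseq ρ L k = .inl (n, j) := by
  induction n with
  | zero => exact ⟨0, 0, le_refl _, rfl⟩
  | succ n ih =>
    obtain ⟨k, j, hk, h1⟩ := ih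
    rcases mstep_inl ρ L n j with h | ⟨H, h, _, _⟩
    · exact ⟨k+1, j, by omega, by rw [mseq_succ, h1, h]⟩
    · have e1 : mseq ρ L (k+1) = .inr (n, j, H) := by rw [mseq_succ, h1, h]
      exact ⟨k+2, j+1, by omega, by rw [mseq_succ, e1, mstep_inr']⟩
/-- if the pointer's target group has an edge taken infinitely often, the pointer advances -/
lemma mptr_advances (hrel : ∀ H ∈ L, ∃ e ∈ H.1, EdgeInfOft ρ e) (hlen : 0 < L.length)
    (k : ℕ) : ∃ k', k ≤ k' ∧ mptr (mseq ρ L k) < mptr (mseq ρ L k') := by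
  rcases hs : mseq ρ L k with ⟨n, j⟩ | ⟨n, j, H⟩
  · -- left state: target group
    have hj : j % L.length < L.length := Nat.mod_lt _ hlen
    set H := L[j % L.length] with hH
    have hLj : L[j % L.length]? = some H := List.getElem?_eq_getElem hj
    obtain ⟨e, heH, heInf⟩ := hrel H (List.getElem_mem hj)
    obtain ⟨n', hn', he1, he2⟩ := heInf n
    -- while pointer stays j, the position advances each step
    have key : ∀ d, (∃ k', k ≤ k' ∧ j < mptr (mseq ρ L k')) ∨
        mseq ρ L (k + d) = .inl (n + d, j) := by
      intro d
      induction d with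
      | zero => exact Or.inr (by simpa using hs)
      | succ d ih =>
        rcases ih with h | h
        · exact Or.inl h
        · rcases mstep_inl ρ L (n + d) j with h' | ⟨H', h', _, _⟩
          · exact Or.inr (by rw [show k + (d+1) = (k+d) + 1 by ring, mseq_succ, h, h']; ring_nf)
          · have e1 : mseq ρ L (k + d + 1) = .inr (n + d, j, H') := by rw [mseq_succ, h, h']
            have e2 : mseq ρ L (k + d + 2) = .inl (n + d + 1, j + 1) := by
              rw [mseq_succ, e1, mstep_inr']
            exact Or.inl ⟨k + d + 2, by omega, by rw [e2]; simp [mptr]⟩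
    rcases key (n' - n) with ⟨k', hk', hlt⟩ | h
    · exact ⟨k', hk', by simpa [mptr] using hlt⟩
    · -- at position n', the condition triggers
      have hnn : n + (n' - n) = n' := by omega
      rw [hnn] at h
      have hcond : (ρ n', ρ (n' + 1)) ∈ H.1 := by rw [he1, he2]; exact heH
      have h' : mstep ρ L (.inl (n', j)) = .inr (n', j, H) := by
        rcases mstep_inl ρ L n' j with h' | ⟨H', h', hL', _⟩
        · exfalso
          have : mstep ρ L (.inl (n', j)) ≠ .inl (n' + 1, j) := by
            simp [mstep, hLj, hcond]
          exact this h'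
        · rw [hL'] at hLj; simp at hLj; rw [h', hLj]
      have e1 : mseq ρ L (k + (n' - n) + 1) = .inr (n', j, H) := by rw [mseq_succ, h, h']
      have e2 : mseq ρ L (k + (n' - n) + 2) = .inl (n' + 1, j + 1) := by
        rw [mseq_succ, e1, mstep_inr']
      exact ⟨k + (n' - n) + 2, by omega, by rw [e2]; simp [mptr]⟩
  · -- inr state: next step advances
    have e2 : mseq ρ L (k + 1) = .inl (n+1, j+1) := by rw [mseq_succ, hs, mstep_inr']
    exact ⟨k + 1, by omega, by rw [e2]; simp [mptr]⟩

lemma mptr_unbounded (hrel : ∀ H ∈ L, ∃ e ∈ H.1, EdgeInfOft ρ e) (hlen : 0 < L.length)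
    (m : ℕ) : ∃ k, m ≤ mptr (mseq ρ L k) := by
  induction m with
  | zero => exact ⟨0, by omega⟩
  | succ m ih =>
    obtain ⟨k, hk⟩ := ih
    obtain ⟨k', _, hlt⟩ := mptr_advances ρ L hrel hlen k
    exact ⟨k', by omega⟩

/-- every pointer value `j₀` is served: there is a step entering the inserted
vertex of the group `L[j₀ % len]` -/
lemma mserve (hrel : ∀ H ∈ L, ∃ e ∈ H.1, EdgeInfOft ρ e) (hlen : 0 < L.length)
    (j0 : ℕ) : ∃ k n H, j0 ≤ k + 1 ∧ mseq ρ L k = .inl (n, j0) ∧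
      mseq ρ L (k+1) = .inr (n, j0, H) ∧ L[j0 % L.length]? = some H ∧
      (ρ n, ρ (n+1)) ∈ H.1 := by
  obtain ⟨k, hk1, hk2⟩ := nat_cross (fun k => mptr (mseq ρ L k)) (mptr_step ρ L)
    (by simp [mseq_zero, mptr]) (mptr_unbounded ρ L hrel hlen) j0
  -- the step from k to k+1 increments the pointer, so mseq k is an inr state
  rcases mseq_cases ρ L k with ⟨n, j, h1, h2⟩ | ⟨n, j, H, h1, h2, hL, hm⟩ |
    ⟨n, j, H, h1, h2, hL, hm⟩
  · rw [h1] at hk1; rw [h2] at hk2; simp [mptr] at hk1 hk2; omega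
  · rw [h1] at hk1; rw [h2] at hk2; simp [mptr] at hk1 hk2; omega
  · rw [h1] at hk1
    simp [mptr] at hk1
    subst hk1
    -- mseq k = inr (n, j0, H); find its predecessor
    have hk0 : k ≠ 0 := by intro h; rw [h, mseq_zero] at h1; simp at h1
    obtain ⟨k', rfl⟩ := Nat.exists_eq_succ_of_ne_zero hk0
    rcases mseq_cases ρ L k' with ⟨a, b, g1, g2⟩ | ⟨a, b, H', g1, g2, gL, gm⟩ |
      ⟨a, b, H', g1, g2, gL, gm⟩
    · rw [g2] at h1; simp at h1
    · have heq : n = a ∧ j = b ∧ H = H' := by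
        have := h1.symm.trans g2
        simpa using this
      obtain ⟨rfl, rfl, rfl⟩ := heq
      have hjk : j ≤ k' + 1 := by
        have := mptr_le ρ L (k' + 1)
        rw [g2] at this; simpa [mptr] using this
      exact ⟨k', n, H, hjk, g1, g2, gL, gm⟩
    · rw [g2] at h1; simp at h1

end Machine



/-- Let `𝔊 = (G, Φ, ψ_glive(ℋ))` be an augmented reachability or
parity game in which every live group has a singleton source set, and let
`𝔊' = (G', Φ', ψ_live(Eℓ))` be the associated game with live edges obtained by
the splitting construction (the vertices of `G'` are the vertices of `G` plus a
fresh Player-1 vertex per group, edges and objectives are as described, and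
`Eℓ = {(v, v_H) : src(H) = {v}}`).  Then for every vertex `v` a positional
Player-0 strategy (given by its choice function `f`, the Player-0 vertices and
edges being the same in both games) is winning from `v` in `𝔊` iff it is
winning from `v` in `𝔊'`. -/
theorem stmt8 (V : Type) [Fintype V] (G : GameGraph V)
    (Hc : Set (Set (V × V)))
    (hHE : ∀ H ∈ Hc, ∀ e ∈ H, G.E e.1 e.2)
    (hH1 : ∀ H ∈ Hc, ∀ e ∈ H, G.owner e.1 = 1)
    (hsing : ∀ H ∈ Hc, ∃ v : V, srcSet H = {v})
    (G' : GameGraph (V ⊕ {H : Set (V × V) // H ∈ Hc}))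
    (howner0 : ∀ v : V, G'.owner (Sum.inl v) = G.owner v)
    (howner1 : ∀ H : {H : Set (V × V) // H ∈ Hc}, G'.owner (Sum.inr H) = 1)
    (hE1 : ∀ u w : V, G'.E (Sum.inl u) (Sum.inl w) ↔ G.E u w)
    (hE2 : ∀ (u : V) (H : {H : Set (V × V) // H ∈ Hc}),
      G'.E (Sum.inl u) (Sum.inr H) ↔ srcSet H.1 = {u})
    (hE3 : ∀ (H : {H : Set (V × V) // H ∈ Hc}) (w : V),
      G'.E (Sum.inr H) (Sum.inl w) ↔ ∃ u : V, (u, w) ∈ H.1)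
    (hE4 : ∀ H H' : {H : Set (V × V) // H ∈ Hc}, ¬ G'.E (Sum.inr H) (Sum.inr H'))
    (Φ : Set (ℕ → V)) (Φ' : Set (ℕ → V ⊕ {H : Set (V × V) // H ∈ Hc}))
    (hΦ :
      (∃ T : Set V,
          Φ = {ρ | ∃ n, ρ n ∈ T} ∧
          Φ' = {ρ | ∃ n, ∃ t ∈ T, ρ n = Sum.inl t}) ∨
      (∃ (d : ℕ) (P : V → ℕ), (∀ v, P v ≤ d) ∧
          Φ = {ρ | ParityWin P ρ} ∧
          Φ' = {ρ | ParityWin (Sum.elim P fun _ => 0) ρ}))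
    (f : V → V) (hf : ∀ v, G.owner v = 0 → G.E v (f v))
    (v : V) :
    WinsFrom G 0 {ρ | psiGlive Hc ρ → ρ ∈ Φ} (fun _ u => f u) v ↔
      WinsFrom G' 0
        {ρ | psiLive
            {e | ∃ (u : V) (H : {H : Set (V × V) // H ∈ Hc}),
              srcSet H.1 = {u} ∧ e = (Sum.inl u, Sum.inr H)} ρ → ρ ∈ Φ'}
        (fun _ x => Sum.elim (fun u => Sum.inl (f u)) (fun H => Sum.inr H) x)
        (Sum.inl v) := by
  classical
  constructor
  · -- winning in 𝔊 implies winning in 𝔊'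
    rintro ⟨hGval, hwin⟩
    constructor
    · rintro h (u | H) hx
      · show G'.E (Sum.inl u) (Sum.inl (f u))
        rw [howner0] at hx
        exact (hE1 u (f u)).mpr (hf u hx)
      · rw [howner1] at hx
        exact absurd hx (by decide)
    · intro ρ' hplay' hcomp' h0'
      simp only [Set.mem_setOf_eq]
      intro hlive
      have h0L : (ρ' 0).isLeft := by rw [h0']; rfl
      have hnotwo : ∀ k, (ρ' k).isRight → (ρ' (k+1)).isLeft := by
        intro k hk
        rcases hx : ρ' k with x | x
        · rw [hx] at hk; simp at hk
        · have he := hplay' k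
          rw [hx] at he
          rcases hy : ρ' (k+1) with y | y
          · simp
          · rw [hy] at he; exact absurd he (hE4 x y)
      set ρp : ℕ → V := fun n => Sum.elim id (fun _ => v) (ρ' (pj ρ' n)) with hρp
      have hpl : ∀ n, ρ' (pj ρ' n) = .inl (ρp n) := by
        intro n
        have hl := pj_isLeft h0L hnotwo n
        rcases hx : ρ' (pj ρ' n) with x | x
        · simp [hρp, hx]
        · rw [hx] at hl; simp at hl
      have hpcase : ∀ n, (pj ρ' (n+1) = pj ρ' n + 1 ∧ (ρ' (pj ρ' n + 1)).isLeft) ∨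
          (pj ρ' (n+1) = pj ρ' n + 2 ∧ ∃ H, ρ' (pj ρ' n + 1) = .inr H) := by
        intro n
        by_cases hL : (ρ' (pj ρ' n + 1)).isLeft
        · exact Or.inl ⟨by rw [pj_succ, if_pos hL], hL⟩
        · refine Or.inr ⟨by rw [pj_succ, if_neg hL], ?_⟩
          rcases hx : ρ' (pj ρ' n + 1) with x | x
          · rw [hx] at hL; simp at hL
          · exact ⟨x, rfl⟩
      have hplayρ : IsPlay G ρp := by
        intro n
        have hn := hpl n
        have hn1 := hpl (n+1)
        rcases hpcase n with ⟨he, hL⟩ | ⟨he, H, hH⟩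
        · have hpe := hplay' (pj ρ' n)
          rw [he] at hn1
          rw [hn, hn1] at hpe
          exact (hE1 _ _).mp hpe
        · have e1 := hplay' (pj ρ' n)
          rw [hn, hH] at e1
          have hsrc := (hE2 _ _).mp e1
          have e2 := hplay' (pj ρ' n + 1)
          have hstep2 : ρ' (pj ρ' n + 1 + 1) = .inl (ρp (n+1)) := by
            rw [show pj ρ' n + 1 + 1 = pj ρ' n + 2 by ring, ← he, hn1]
          rw [hH, hstep2] at e2
          obtain ⟨u', hu'⟩ := (hE3 _ _).mp e2
          have hu'' : u' ∈ srcSet H.1 := ⟨_, hu'⟩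
          rw [hsrc, Set.mem_singleton_iff] at hu''
          subst hu''
          exact hHE H.1 H.2 _ hu'
      have hcompρ : Compliant G 0 (fun _ u => f u) ρp := by
        intro k hk
        have hcp := hcomp' (pj ρ' k) (by rw [hpl k, howner0]; exact hk)
        rw [hpl k] at hcp
        have hcp' : ρ' (pj ρ' k + 1) = Sum.inl (f (ρp k)) := hcp
        rcases hpcase k with ⟨he, hL⟩ | ⟨he, H, hH⟩
        · have h2 := hpl (k+1)
          rw [he, hcp'] at h2
          exact (Sum.inl_injective h2).symm
        · rw [hcp'] at hH; simp at hH
      have hρ0 : ρp 0 = v := by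
        have h00 := hpl 0
        rw [show pj ρ' 0 = 0 from rfl, h0'] at h00
        exact (Sum.inl_injective h00).symm
      have hWΦ := hwin ρp hplayρ hcompρ hρ0
      simp only [Set.mem_setOf_eq] at hWΦ
      have hInfUp : ∀ x, InfOft ρp x → InfOft ρ' (.inl x) := by
        intro x hx N
        obtain ⟨n, hn, hρn⟩ := hx N
        exact ⟨pj ρ' n, le_trans hn (pj_ge n), by rw [hpl n, hρn]⟩
      have hInfDown : ∀ x, InfOft ρ' (.inl x) → InfOft ρp x := by
        intro x hx N
        obtain ⟨k, hk, hρk⟩ := hx (2 * N)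
        obtain ⟨n, hn⟩ := pj_surj h0L hnotwo k (by rw [hρk]; rfl)
        refine ⟨n, ?_, ?_⟩
        · have := pj_le (ρ' := ρ') n
          omega
        · have h2 := hpl n
          rw [hn, hρk] at h2
          exact (Sum.inl_injective h2).symm
      have hglive : psiGlive Hc ρp := by
        intro H hH hex
        obtain ⟨u, huS, huI⟩ := hex
        obtain ⟨u0, hu0⟩ := hsing H hH
        have huu : u = u0 := by rw [hu0] at huS; exact huS
        subst huu
        have hEdge := hlive (Sum.inl u, Sum.inr ⟨H, hH⟩) ⟨u, ⟨H, hH⟩, hu0, rfl⟩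
          (hInfUp u huI)
        obtain ⟨w, hw⟩ := pigeon_freq (fun k => Sum.elim id (fun _ => v) (ρ' (k+2)))
          {k | ρ' k = .inl u ∧ ρ' (k+1) = .inr ⟨H, hH⟩} (by
            intro n
            obtain ⟨k, hk, h1, h2⟩ := hEdge n
            exact ⟨k, hk, h1, h2⟩)
        have key : ∀ k, ρ' k = .inl u → ρ' (k+1) = .inr ⟨H, hH⟩ →
            ∃ n, pj ρ' n = k ∧ ρp n = u ∧
              ρp (n+1) = Sum.elim id (fun _ => v) (ρ' (k+2)) ∧ (u, ρp (n+1)) ∈ H := by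
          intro k h1 h2
          obtain ⟨n, hn⟩ := pj_surj h0L hnotwo k (by rw [h1]; rfl)
          have hnl : ¬ (ρ' (pj ρ' n + 1)).isLeft := by rw [hn, h2]; simp
          have hsucc : pj ρ' (n+1) = k + 2 := by rw [pj_succ, if_neg hnl, hn]
          have hρpn : ρp n = u := by
            have h3 := hpl n
            rw [hn, h1] at h3
            exact (Sum.inl_injective h3).symm
          have hρpn1 : ρ' (k+2) = .inl (ρp (n+1)) := by
            rw [← hsucc]; exact hpl (n+1)
          have e2 := hplay' (k+1)
          rw [h2, show k+1+1 = k+2 by ring, hρpn1] at e2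
          obtain ⟨u', hu'⟩ := (hE3 _ _).mp e2
          have hu'' : u' ∈ srcSet H := ⟨_, hu'⟩
          rw [hu0, Set.mem_singleton_iff] at hu''
          subst hu''
          refine ⟨n, hn, hρpn, ?_, hu'⟩
          rw [hρpn1]; rfl
        obtain ⟨k0, _, hk0S, hk0w⟩ := hw 0
        obtain ⟨n0, _, _, hval0, hmem0⟩ := key k0 hk0S.1 hk0S.2
        have hwH : (u, w) ∈ H := by rw [← hk0w, ← hval0]; exact hmem0
        refine ⟨(u, w), hwH, ?_⟩
        intro N
        obtain ⟨k, hkN, hkS, hkw⟩ := hw (2 * N)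
        obtain ⟨n, hn, hρn, hval, _⟩ := key k hkS.1 hkS.2
        refine ⟨n, ?_, hρn, by rw [hval, hkw]⟩
        have := pj_le (ρ' := ρ') n
        omega
      have hΦmem := hWΦ hglive
      rcases hΦ with ⟨T, hΦeq, hΦ'eq⟩ | ⟨d, P, hPd, hΦeq, hΦ'eq⟩
      · rw [hΦ'eq]
        rw [hΦeq] at hΦmem
        obtain ⟨n, hn⟩ := hΦmem
        exact ⟨pj ρ' n, ρp n, hn, hpl n⟩
      · rw [hΦ'eq]
        rw [hΦeq] at hΦmem
        obtain ⟨x, hxI, hxE, hxM⟩ := hΦmem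
        refine ⟨.inl x, hInfUp x hxI, by simpa using hxE, ?_⟩
        rintro (w | H) hwI
        · simpa using hxM w (hInfDown w hwI)
        · simp
  · -- winning in 𝔊' implies winning in 𝔊
    rintro ⟨hG'val, hwin'⟩
    refine ⟨fun h u hu => hf u hu, ?_⟩
    intro ρ hplay hcomp h0
    simp only [Set.mem_setOf_eq]
    intro hglive
    set L : List {H : Set (V × V) // H ∈ Hc} :=
      (Set.toFinite {H : {H : Set (V × V) // H ∈ Hc} | ∃ e ∈ H.1, EdgeInfOft ρ e}).toFinset.toList with hLdef
    have hmemL : ∀ H : {H : Set (V × V) // H ∈ Hc},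
        H ∈ L ↔ ∃ e ∈ H.1, EdgeInfOft ρ e := by
      intro H
      rw [hLdef, Finset.mem_toList, Set.Finite.mem_toFinset]
      rfl
    have hrel : ∀ H ∈ L, ∃ e ∈ H.1, EdgeInfOft ρ e := fun H hH => (hmemL H).mp hH
    set ρ' : ℕ → V ⊕ {H : Set (V × V) // H ∈ Hc} := fun k =>
      Sum.elim (fun nj => Sum.inl (ρ nj.1)) (fun t => Sum.inr t.2.2) (mseq ρ L k) with hρ'
    have hval_inl : ∀ k n j, mseq ρ L k = .inl (n, j) → ρ' k = .inl (ρ n) := by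
      intro k n j h; rw [hρ']; simp only; rw [h]; rfl
    have hval_inr : ∀ k n j H, mseq ρ L k = .inr (n, j, H) → ρ' k = .inr H := by
      intro k n j H h; rw [hρ']; simp only; rw [h]; rfl
    have hval_cases : ∀ k x, ρ' k = .inl x → ∃ n j, mseq ρ L k = .inl (n, j) ∧ x = ρ n := by
      intro k x h
      rcases hs : mseq ρ L k with ⟨n, j⟩ | ⟨n, j, H⟩
      · refine ⟨n, j, rfl, ?_⟩
        rw [hval_inl k n j hs] at h
        exact (Sum.inl_injective h).symm
      · rw [hval_inr k n j H hs] at h; simp at h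
    have hplay' : IsPlay G' ρ' := by
      intro k
      rcases mseq_cases ρ L k with ⟨n, j, h1, h2⟩ | ⟨n, j, H, h1, h2, hLj, hm⟩ |
        ⟨n, j, H, h1, h2, hLj, hm⟩
      · rw [hval_inl k n j h1, hval_inl (k+1) (n+1) j h2]
        exact (hE1 _ _).mpr (hplay n)
      · rw [hval_inl k n j h1, hval_inr (k+1) n j H h2, hE2]
        obtain ⟨u0, hu0⟩ := hsing H.1 H.2
        have h3 : ρ n ∈ srcSet H.1 := ⟨_, hm⟩
        rw [hu0, Set.mem_singleton_iff] at h3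
        rw [hu0, h3]
      · rw [hval_inr k n j H h1, hval_inl (k+1) (n+1) (j+1) h2, hE3]
        exact ⟨ρ n, hm⟩
    have hcomp' : Compliant G' 0
        (fun _ x => Sum.elim (fun u => Sum.inl (f u)) (fun H => Sum.inr H) x) ρ' := by
      intro k hk
      rcases mseq_cases ρ L k with ⟨n, j, h1, h2⟩ | ⟨n, j, H, h1, h2, hLj, hm⟩ |
        ⟨n, j, H, h1, h2, hLj, hm⟩
      · rw [hval_inl k n j h1, howner0] at hk
        rw [hval_inl k n j h1, hval_inl (k+1) (n+1) j h2]
        exact congrArg Sum.inl (hcomp n hk)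
      · exfalso
        rw [hval_inl k n j h1, howner0] at hk
        have h3 := hH1 H.1 H.2 _ hm
        rw [hk] at h3
        exact absurd h3 (by decide)
      · exfalso
        rw [hval_inr k n j H h1, howner1] at hk
        exact absurd hk (by decide)
    have h0' : ρ' 0 = .inl v := by
      rw [hval_inl 0 0 0 (mseq_zero ρ L), h0]
    have hW' := hwin' ρ' hplay' hcomp' h0'
    simp only [Set.mem_setOf_eq] at hW'
    have hInfUp : ∀ x, InfOft ρ x → InfOft ρ' (.inl x) := by
      intro x hx N
      obtain ⟨n, hnN, hρn⟩ := hx N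
      obtain ⟨k, j, hkn, hs⟩ := mseq_left_reach ρ L n
      exact ⟨k, by omega, by rw [hval_inl k n j hs, hρn]⟩
    have hInfDown : ∀ x, InfOft ρ' (.inl x) → InfOft ρ x := by
      intro x hx N
      obtain ⟨k, hkN, hρk⟩ := hx (2 * N)
      obtain ⟨n, j, hs, rfl⟩ := hval_cases k _ hρk
      have := (mpos_lb ρ L k).1 n j hs
      exact ⟨n, by omega, rfl⟩
    have hpsiL : psiLive {e | ∃ (u : V) (H : {H : Set (V × V) // H ∈ Hc}),
        srcSet H.1 = {u} ∧ e = (Sum.inl u, Sum.inr H)} ρ' := by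
      rintro e ⟨u, Hs, hsrc, rfl⟩ hinf
      have huI : InfOft ρ u := hInfDown u hinf
      obtain ⟨e', he'H, he'I⟩ := hglive Hs.1 Hs.2 ⟨u, by rw [hsrc]; rfl, huI⟩
      have hHsL : Hs ∈ L := (hmemL Hs).mpr ⟨e', he'H, he'I⟩
      have hlen : 0 < L.length := List.length_pos_iff.mpr (List.ne_nil_of_mem hHsL)
      obtain ⟨i, hi, hLi⟩ := List.mem_iff_getElem.mp hHsL
      intro N
      obtain ⟨k, n, H, hjk, hsl, hsr, hLj, hm⟩ := mserve ρ L hrel hlen (i + L.length * (N+1))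
      have hmod : (i + L.length * (N+1)) % L.length = i := by
        rw [Nat.add_mul_mod_self_left, Nat.mod_eq_of_lt hi]
      rw [hmod, List.getElem?_eq_getElem hi, hLi] at hLj
      have hHH : H = Hs := by injection hLj with h; exact h.symm
      subst hHH
      have hρnu : ρ n = u := by
        have h3 : ρ n ∈ srcSet H.1 := ⟨_, hm⟩
        rw [hsrc, Set.mem_singleton_iff] at h3
        exact h3
      refine ⟨k, ?_, ?_, ?_⟩
      · have : N + 1 ≤ L.length * (N+1) := Nat.le_mul_of_pos_left _ hlen
        omega
      · show ρ' k = Sum.inl u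
        rw [hval_inl k n _ hsl, hρnu]
      · show ρ' (k+1) = Sum.inr H
        exact hval_inr (k+1) n _ H hsr
    have hΦ'mem := hW' hpsiL
    rcases hΦ with ⟨T, hΦeq, hΦ'eq⟩ | ⟨d, P, hPd, hΦeq, hΦ'eq⟩
    · rw [hΦeq]
      rw [hΦ'eq] at hΦ'mem
      obtain ⟨m, t, htT, hmt⟩ := hΦ'mem
      obtain ⟨n, j, hs, rfl⟩ := hval_cases m t hmt
      exact ⟨n, htT⟩
    · rw [hΦeq]
      rw [hΦ'eq] at hΦ'mem
      obtain ⟨y, hyI, hyE, hyM⟩ := hΦ'mem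
      rcases y with x | H
      · refine ⟨x, hInfDown x hyI, by simpa using hyE, ?_⟩
        intro w hwI
        simpa using hyM (.inl w) (hInfUp w hwI)
      · obtain ⟨u0, hu0⟩ := pigeon_freq ρ Set.univ (fun n => ⟨n, le_refl n, trivial⟩)
        have hu0I : InfOft ρ u0 := fun n => by
          obtain ⟨k, hk, _, h⟩ := hu0 n; exact ⟨k, hk, h⟩
        have hP0 : P u0 = 0 := by
          have := hyM (.inl u0) (hInfUp u0 hu0I)
          simpa using this
        refine ⟨u0, hu0I, by rw [hP0]; exact Even.zero, ?_⟩
        intro w hwI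
        have := hyM (.inl w) (hInfUp w hwI)
        simp at this
        omega
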